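/- arXiv:2102.11839 — 9 statements merged into one kernel-verified Lean document; each statement's English description precedes it below -/
import Mathlib

section
/- For every positive integer n, the coefficient of x^n y^n in the polynomial ((x+1)(y+1)(x+y))^n ∈ ℤ[x,y] equals the n-th Franel number A_n = ∑_{k=0}^{n} C(n,k)^3. (Equivalently, the Franel numbers, i.e. Zagier's sporadic sequence A, form the constant term sequence of the Laurent polynomial (x+1)(y+1)(x+y)/(xy).) -/
/-! Expanding the three binomials, `((x+1)(y+1)(x+y))^n` is the sum over `a, b, c ≤ n` of
`C(n,a) C(n,b) C(n,c) x^(a+c) y^(b+n-c)`. Such a term lands on `x^n y^n` exactly when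
`a = n - c` and `b = c`, so the coefficient is `∑ C(n,n-c) C(n,c)^2 = ∑ C(n,c)^3`. -/

open MvPolynomial Finset

theorem Finsupp.single_add_single_eq_single_add_single_iff {σ : Type*} {i j : σ} (hij : i ≠ j)
    {a b m n : ℕ} :
    single i a + single j b = single i m + single j n ↔ a = m ∧ b = n := by
  refine ⟨fun h => ⟨?_, ?_⟩, by rintro ⟨rfl, rfl⟩; rfl⟩
  · simpa [hij] using DFunLike.congr_fun h i
  · simpa [hij.symm] using DFunLike.congr_fun h j

namespace MvPolynomial

variable {R σ : Type*} [CommSemiring R]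

theorem coeff_single_add_single_monomial {i j : σ} (hij : i ≠ j) (a b m n : ℕ) (r : R) :
    coeff (Finsupp.single i m + Finsupp.single j n)
        (monomial (Finsupp.single i a + Finsupp.single j b) r) =
      if a = m ∧ b = n then r else 0 := by
  classical
  rw [coeff_monomial]
  exact if_congr (Finsupp.single_add_single_eq_single_add_single_iff hij) rfl rfl

theorem X_add_one_pow (i : σ) (n : ℕ) :
    (X i + 1 : MvPolynomial σ R) ^ n =
      ∑ a ∈ range (n + 1), monomial (Finsupp.single i a) (n.choose a : R) := by
  rw [add_pow]
  refine sum_congr rfl fun a _ => ?_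
  rw [one_pow, mul_one, ← C_mul_X_pow_eq_monomial, map_natCast, mul_comm]

theorem X_add_X_pow (i j : σ) (n : ℕ) :
    (X i + X j : MvPolynomial σ R) ^ n =
      ∑ c ∈ range (n + 1),
        monomial (Finsupp.single i c + Finsupp.single j (n - c)) (n.choose c : R) := by
  rw [add_pow]
  refine sum_congr rfl fun c _ => ?_
  rw [X_pow_eq_monomial, X_pow_eq_monomial, monomial_mul, one_mul, mul_comm, ← map_natCast C,
    C_mul_monomial, mul_one]

theorem X_add_one_mul_X_add_one_mul_X_add_X_pow (i j : σ) (n : ℕ) :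
    ((X i + 1) * (X j + 1) * (X i + X j) : MvPolynomial σ R) ^ n =
      ∑ c ∈ range (n + 1), ∑ a ∈ range (n + 1), ∑ b ∈ range (n + 1),
        monomial (Finsupp.single i (a + c) + Finsupp.single j (b + (n - c)))
          (n.choose a * n.choose b * n.choose c : R) := by
  rw [mul_pow, mul_pow, X_add_one_pow, X_add_one_pow, X_add_X_pow, sum_mul_sum, mul_sum]
  refine sum_congr rfl fun c _ => ?_
  rw [sum_mul]
  refine sum_congr rfl fun a _ => ?_
  rw [sum_mul]
  refine sum_congr rfl fun b _ => ?_
  rw [monomial_mul, monomial_mul, Finsupp.single_add, Finsupp.single_add, add_add_add_comm]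

end MvPolynomial

theorem sum_ite_choose_mul_choose_mul_choose (n : ℕ) :
    ∑ c ∈ range (n + 1), ∑ a ∈ range (n + 1), ∑ b ∈ range (n + 1),
        (if a + c = n ∧ b + (n - c) = n then (n.choose a * n.choose b * n.choose c : ℤ) else 0) =
      ∑ c ∈ range (n + 1), (n.choose c : ℤ) ^ 3 := by
  refine sum_congr rfl fun c hc => ?_
  have hcn : c ≤ n := Nat.lt_succ_iff.mp (mem_range.mp hc)
  have diagonal : ∀ a b, a + c = n ∧ b + (n - c) = n ↔ a = n - c ∧ b = c := by omega
  simp only [diagonal, ite_and, sum_ite_irrel, sum_const_zero, sum_ite_eq', mem_range,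
    Nat.lt_succ_iff, Nat.sub_le, hcn, if_true, Nat.choose_symm hcn]
  ring

theorem franel_constant_term_general (n : ℕ) :
    (((X 0 + 1) * (X 1 + 1) * (X 0 + X 1) : MvPolynomial (Fin 2) ℤ) ^ n).coeff
      (Finsupp.equivFunOnFinite.symm fun _ => n) =
    ∑ k ∈ range (n + 1), (n.choose k : ℤ) ^ 3 := by
  have hdiag : (Finsupp.equivFunOnFinite.symm fun _ => n : Fin 2 →₀ ℕ) =
      Finsupp.single 0 n + Finsupp.single 1 n := by
    ext i; fin_cases i <;> simp
  simp only [hdiag, X_add_one_mul_X_add_one_mul_X_add_X_pow, coeff_sum,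
    coeff_single_add_single_monomial Fin.zero_ne_one]
  exact sum_ite_choose_mul_choose_mul_choose n

/-- Zagier's sporadic sequence A (the Franel numbers) is the constant term sequence of
the Laurent polynomial `(x+1)(y+1)(x+y)/(xy)`: the coefficient of `x^n y^n` in
`((x+1)(y+1)(x+y))^n` equals the `n`-th Franel number `∑_{k=0}^n C(n,k)^3`. -/
theorem franel_constant_term (n : ℕ) (hn : 0 < n) :
    (((X 0 + 1) * (X 1 + 1) * (X 0 + X 1) : MvPolynomial (Fin 2) ℤ) ^ n).coeff
      (Finsupp.equivFunOnFinite.symm fun _ => n) =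
    ∑ k ∈ range (n + 1), (n.choose k : ℤ) ^ 3 :=
  franel_constant_term_general n
end

section
/- For every positive integer n, the coefficient of x^n y^n in the polynomial ((x+y+1)(x^2+y^2-xy-x-y+1))^n ∈ ℤ[x,y] equals (-1)^n B_n, where B_n = ∑_{k=0}^{⌊n/3⌋} (-1)^k 3^{n-3k} C(n,3k) C(3k,2k) C(2k,k) is Zagier's sporadic sequence B. (Equivalently, B is the constant term sequence of the Laurent polynomial (x+y+1)(x^2+y^2-xy-x-y+1)/(-xy).) -/
/-!
The factorisation `a³ + b³ + c³ - 3abc = (a + b + c)(a² + b² + c² - ab - bc - ca)` at `c = 1`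
writes the polynomial as `E(1 + x + y) - 3xy`, where `E` substitutes `x³, y³` for `x, y`.
Expanding binomially in `-3xy`, the coefficient of `xⁿyⁿ` is
`∑ᵢ C(n, i) (-3)ⁿ⁻ⁱ [xⁱyⁱ] E((1 + x + y)ⁱ)`. The `i`-th term vanishes unless `i = 3k`, and then
it is the trinomial coefficient `[xᵏyᵏ] (1 + x + y)³ᵏ = C(3k, 2k) C(2k, k)`.
-/

open MvPolynomial Finset

/-- Zagier's sporadic sequence B. -/
def zagierB (n : ℕ) : ℤ :=
  ∑ k ∈ range (n / 3 + 1),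
    (-1) ^ k * 3 ^ (n - 3 * k) * (n.choose (3 * k) : ℤ) *
      ((3 * k).choose (2 * k) : ℤ) * ((2 * k).choose k : ℤ)

noncomputable def diagExp {σ : Type*} [Finite σ] (n : ℕ) : σ →₀ ℕ :=
  Finsupp.equivFunOnFinite.symm fun _ => n

section Diagonal

variable {σ R : Type*} [Finite σ] [CommSemiring R]

@[simp]
lemma diagExp_apply (n : ℕ) (i : σ) : diagExp n i = n := rfl

lemma diagExp_add (a b : ℕ) : (diagExp (a + b) : σ →₀ ℕ) = diagExp a + diagExp b := by
  ext; simp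

lemma diagExp_mul (p k : ℕ) : (diagExp (p * k) : σ →₀ ℕ) = p • diagExp k := by
  ext; simp

lemma coeff_diagExp_add_monomial_pow (f : MvPolynomial σ R) (c : R) (n : ℕ) :
    coeff (diagExp n) ((f + monomial (diagExp 1) c) ^ n) =
      ∑ i ∈ range (n + 1), n.choose i * c ^ (n - i) * coeff (diagExp i) (f ^ i) := by
  rw [add_pow, coeff_sum]
  refine sum_congr rfl fun i hi => ?_
  obtain ⟨j, rfl⟩ := Nat.exists_eq_add_of_le (Nat.lt_succ_iff.mp (mem_range.mp hi))
  rw [monomial_pow, ← diagExp_mul, mul_one, ← Nat.cast_comm, ← C_eq_coe_nat, mul_assoc,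
    coeff_C_mul, Nat.add_sub_cancel_left, diagExp_add, coeff_mul_monomial]
  ring

lemma coeff_diagExp_expand {p : ℕ} (hp : p ≠ 0) (k : ℕ) (f : MvPolynomial σ R) :
    coeff (diagExp (p * k)) (expand p f) = coeff (diagExp k) f := by
  rw [diagExp_mul, coeff_expand_smul _ hp]

lemma coeff_diagExp_expand_of_not_dvd [Nonempty σ] {p i : ℕ} (h : ¬ p ∣ i)
    (f : MvPolynomial σ R) : coeff (diagExp i) (expand p f) = 0 :=
  coeff_expand_of_not_dvd f (i := Classical.arbitrary σ) h

end Diagonal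

lemma coeff_one_add_X_add_X_pow {R : Type*} [CommSemiring R] (d : Fin 2 →₀ ℕ) (m : ℕ) :
    coeff d ((1 + X 0 + X 1 : MvPolynomial (Fin 2) R) ^ m) =
      m.choose (d 0 + d 1) * (d 0 + d 1).choose (d 0) := by
  rw [add_assoc, add_comm, add_pow, coeff_sum]
  simp only [one_pow, mul_one, ← C_eq_coe_nat, mul_comm _ (C _), coeff_C_mul, coeff_add_pow,
    HasAntidiagonal.mem_antidiagonal, Nat.cast_ite, Nat.cast_zero, mul_ite, mul_zero]
  rw [sum_ite_eq, ite_eq_left_iff, mem_range, not_lt]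
  intro h
  rw [Nat.choose_eq_zero_of_lt h, Nat.cast_zero, zero_mul]

lemma sum_range_succ_eq_sum_mul_of_not_dvd {M : Type*} [AddCommMonoid M] {d : ℕ} (hd : 0 < d)
    (n : ℕ) (f : ℕ → M) (hf : ∀ i, ¬ d ∣ i → f i = 0) :
    ∑ i ∈ range (n + 1), f i = ∑ k ∈ range (n / d + 1), f (d * k) := by
  rw [← sum_image (fun a _ b _ h => Nat.eq_of_mul_eq_mul_left hd h)]
  refine (sum_subset ?_ fun i _ hi => hf i ?_).symm
  · intro i hi
    obtain ⟨k, hk, rfl⟩ := mem_image.mp hi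
    have := Nat.mul_div_le n d
    simp only [mem_range] at hk ⊢
    nlinarith
  · rintro ⟨k, rfl⟩
    refine hi (mem_image.mpr ⟨k, ?_, rfl⟩)
    rw [mem_range, Nat.lt_succ_iff] at *
    exact (Nat.le_div_iff_mul_le hd).2 (by linarith [mul_comm d k])

lemma neg_one_pow_sub_three_mul {R : Type*} [Ring R] {n k : ℕ} (h : 3 * k ≤ n) :
    (-1 : R) ^ (n - 3 * k) = (-1) ^ n * (-1) ^ k := by
  obtain ⟨r, rfl⟩ := Nat.exists_eq_add_of_le h
  rw [Nat.add_sub_cancel_left, pow_add, pow_mul]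
  norm_num
  rw [((Commute.refl (-1 : R)).pow_pow k r).eq, mul_assoc, ← pow_add, ← two_mul, pow_mul]
  norm_num

theorem zagierB_constant_term_general (n : ℕ) :
    (((X 0 + X 1 + 1) * (X 0 ^ 2 + X 1 ^ 2 - X 0 * X 1 - X 0 - X 1 + 1) :
        MvPolynomial (Fin 2) ℤ) ^ n).coeff
      (Finsupp.equivFunOnFinite.symm fun _ => n) = (-1) ^ n * zagierB n := by
  set T : MvPolynomial (Fin 2) ℤ := 1 + X 0 + X 1
  have hP : ((X 0 + X 1 + 1) * (X 0 ^ 2 + X 1 ^ 2 - X 0 * X 1 - X 0 - X 1 + 1) :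
      MvPolynomial (Fin 2) ℤ) = expand 3 T + monomial (diagExp 1) (-3) := by
    rw [monomial_fin_two]
    simp only [T, map_add, map_one, expand_X, diagExp_apply, pow_one, map_neg, map_ofNat]
    ring
  rw [hP]
  show coeff (diagExp n) _ = _
  calc coeff (diagExp n) ((expand 3 T + monomial (diagExp 1) (-3)) ^ n)
      = ∑ i ∈ range (n + 1),
          (n.choose i : ℤ) * (-3) ^ (n - i) * coeff (diagExp i) (expand 3 (T ^ i)) := by
        rw [coeff_diagExp_add_monomial_pow]
        simp only [map_pow]
    _ = ∑ k ∈ range (n / 3 + 1), (n.choose (3 * k) : ℤ) * (-3) ^ (n - 3 * k) *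
          coeff (diagExp (3 * k)) (expand 3 (T ^ (3 * k))) :=
        sum_range_succ_eq_sum_mul_of_not_dvd three_pos n _ fun i hi => by
          rw [coeff_diagExp_expand_of_not_dvd hi, mul_zero]
    _ = (-1) ^ n * zagierB n := by
      rw [zagierB, mul_sum]
      refine sum_congr rfl fun k hk => ?_
      have h3k : 3 * k ≤ n := by
        rw [mem_range, Nat.lt_succ_iff, Nat.le_div_iff_mul_le three_pos] at hk
        linarith
      rw [coeff_diagExp_expand three_ne_zero, coeff_one_add_X_add_X_pow, neg_eq_neg_one_mul,
        mul_pow, neg_one_pow_sub_three_mul h3k]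
      simp only [diagExp_apply, ← two_mul]
      ring

/-- Zagier's sporadic sequence B is the constant term sequence of the Laurent polynomial
`(x+y+1)(x²+y²-xy-x-y+1)/(-xy)`: the coefficient of `x^n y^n` in
`((x+y+1)(x²+y²-xy-x-y+1))^n` equals `(-1)^n B_n`. -/
theorem zagierB_constant_term (n : ℕ) (hn : 0 < n) :
    (((X 0 + X 1 + 1) * (X 0 ^ 2 + X 1 ^ 2 - X 0 * X 1 - X 0 - X 1 + 1) :
        MvPolynomial (Fin 2) ℤ) ^ n).coeff
      (Finsupp.equivFunOnFinite.symm fun _ => n) = (-1) ^ n * zagierB n :=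
  zagierB_constant_term_general n
end

section
/- For every positive integer n, the coefficient of x^n y^n in the polynomial ((x+y+1)(xy+x+y))^n ∈ ℤ[x,y] equals C_n = ∑_{k=0}^{n} C(n,k)^2 C(2k,k), i.e. Zagier's sporadic sequence C is the constant term sequence of the Laurent polynomial (x+y+1)(xy+x+y)/(xy). -/
/-!
With `s = x + y` and `p = xy` the polynomial is `(s + 1)(s + p)`, so by the binomial theorem its
`n`-th power is `∑_{a,b} C(n,a) C(n,b) s^(a+b) p^(n-b)`. The monomial `x^n y^n` can only come from
`s^(a+b) p^(n-b)` through `x^b y^b` in the homogeneous `s^(a+b)`, which forces `a = b` and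
contributes `C(2b,b)`.
-/

open MvPolynomial Finset

lemma single_zero_add_single_one_eq_iff (a b c d : ℕ) :
    Finsupp.single (0 : Fin 2) a + Finsupp.single 1 b = Finsupp.single 0 c + Finsupp.single 1 d ↔
      a = c ∧ b = d := by
  constructor
  · intro h
    exact ⟨by simpa using DFunLike.congr_fun h 0, by simpa using DFunLike.congr_fun h 1⟩
  · rintro ⟨rfl, rfl⟩
    rfl

namespace MvPolynomial

variable {R : Type*} [CommSemiring R]

lemma X_pow_mul_X_pow_eq_monomial (i j : ℕ) :
    (X 0 ^ i * X 1 ^ j : MvPolynomial (Fin 2) R) =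
      monomial (Finsupp.single 0 i + Finsupp.single 1 j) 1 := by
  rw [X_pow_eq_monomial, X_pow_eq_monomial, monomial_mul, mul_one]

lemma coeff_X_add_X_pow (N i j : ℕ) :
    ((X 0 + X 1 : MvPolynomial (Fin 2) R) ^ N).coeff (Finsupp.single 0 i + Finsupp.single 1 j) =
      if i + j = N then (N.choose i : R) else 0 := by
  simp only [add_pow, coeff_sum, X_pow_mul_X_pow_eq_monomial, ← C_eq_coe_nat, mul_comm _ (C _),
    coeff_C_mul, coeff_monomial, single_zero_add_single_one_eq_iff, mul_ite, mul_one, mul_zero]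
  split_ifs with h
  · rw [sum_eq_single i (fun x _ hx => if_neg fun hx' => hx hx'.1) (by simp; omega),
      if_pos ⟨rfl, by omega⟩]
  · refine sum_eq_zero fun x hx => if_neg ?_
    rintro ⟨rfl, rfl⟩
    simp only [mem_range] at hx
    omega

lemma coeff_mul_X_mul_X_pow (f : MvPolynomial (Fin 2) R) (i j k : ℕ) :
    (f * (X 0 * X 1) ^ k).coeff (Finsupp.single 0 (i + k) + Finsupp.single 1 (j + k)) =
      f.coeff (Finsupp.single 0 i + Finsupp.single 1 j) := by
  have hexp : Finsupp.single (0 : Fin 2) (i + k) + Finsupp.single 1 (j + k) =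
      (Finsupp.single 0 i + Finsupp.single 1 j) + (Finsupp.single 0 k + Finsupp.single 1 k) := by
    simp only [Finsupp.single_add]
    abel
  rw [mul_pow, X_pow_mul_X_pow_eq_monomial, hexp, coeff_mul_monomial, mul_one]

lemma coeff_X_add_X_pow_mul_X_mul_X_pow (a b k : ℕ) :
    ((X 0 + X 1 : MvPolynomial (Fin 2) R) ^ (a + b) * (X 0 * X 1) ^ k).coeff
        (Finsupp.single 0 (b + k) + Finsupp.single 1 (b + k)) =
      if a = b then ((2 * b).choose b : R) else 0 := by
  rw [coeff_mul_X_mul_X_pow, coeff_X_add_X_pow]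
  by_cases hab : a = b
  · rw [if_pos (by omega), if_pos hab, hab, two_mul]
  · rw [if_neg (by omega), if_neg hab]

lemma coeff_X_add_X_add_one_mul_X_mul_X_add_X_add_X_pow (n : ℕ) :
    (((X 0 + X 1 + 1) * (X 0 * X 1 + X 0 + X 1) : MvPolynomial (Fin 2) R) ^ n).coeff
        (Finsupp.single 0 n + Finsupp.single 1 n) =
      ∑ k ∈ range (n + 1), (n.choose k : R) ^ 2 * ((2 * k).choose k : R) := by
  have hsplit : ((X 0 + X 1 + 1) * (X 0 * X 1 + X 0 + X 1) : MvPolynomial (Fin 2) R) =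
      (X 0 + X 1 + 1) * (X 0 + X 1 + X 0 * X 1) := by ring
  have hterm : ∀ a, ∀ b ∈ range (n + 1),
      (((X 0 + X 1) ^ a * (n.choose a : MvPolynomial (Fin 2) R)) *
          ((X 0 + X 1) ^ b * (X 0 * X 1) ^ (n - b) * (n.choose b : MvPolynomial (Fin 2) R))).coeff
        (Finsupp.single 0 n + Finsupp.single 1 n) =
      if a = b then (n.choose b : R) ^ 2 * ((2 * b).choose b : R) else 0 := by
    intro a b hb
    rw [show ((X 0 + X 1) ^ a * (n.choose a : MvPolynomial (Fin 2) R)) *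
          ((X 0 + X 1) ^ b * (X 0 * X 1) ^ (n - b) * (n.choose b : MvPolynomial (Fin 2) R)) =
        C ((n.choose a : R) * n.choose b) * ((X 0 + X 1) ^ (a + b) * (X 0 * X 1) ^ (n - b)) by
      simp only [map_mul, map_natCast]; ring]
    obtain ⟨k, rfl⟩ := Nat.exists_eq_add_of_le (mem_range_succ_iff.mp hb)
    rw [Nat.add_sub_cancel_left, coeff_C_mul, coeff_X_add_X_pow_mul_X_mul_X_pow, mul_ite, mul_zero]
    split_ifs with hab
    · rw [hab, sq]
    · rfl
  rw [hsplit, mul_pow, add_pow, add_pow, sum_mul_sum]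
  simp only [one_pow, mul_one, coeff_sum]
  rw [sum_congr rfl fun a _ => sum_congr rfl (hterm a), sum_comm]
  exact sum_congr rfl fun b hb => by rw [sum_ite_eq', if_pos hb]

end MvPolynomial

theorem zagierC_constant_term_general (n : ℕ) :
    (((X 0 + X 1 + 1) * (X 0 * X 1 + X 0 + X 1) : MvPolynomial (Fin 2) ℤ) ^ n).coeff
      (Finsupp.equivFunOnFinite.symm fun _ => n) =
    ∑ k ∈ range (n + 1), (n.choose k : ℤ) ^ 2 * ((2 * k).choose k : ℤ) := by
  have hdiag : (Finsupp.equivFunOnFinite.symm fun _ => n : Fin 2 →₀ ℕ) =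
      Finsupp.single 0 n + Finsupp.single 1 n := by
    ext i
    fin_cases i <;> simp
  rw [hdiag, coeff_X_add_X_add_one_mul_X_mul_X_add_X_add_X_pow]

/-- Zagier's sporadic sequence C is the constant term sequence of the Laurent polynomial
`(x+y+1)(xy+x+y)/(xy)`: the coefficient of `x^n y^n` in `((x+y+1)(xy+x+y))^n` equals
`C_n = ∑_{k=0}^n C(n,k)² C(2k,k)`. -/
theorem zagierC_constant_term (n : ℕ) (hn : 0 < n) :
    (((X 0 + X 1 + 1) * (X 0 * X 1 + X 0 + X 1) : MvPolynomial (Fin 2) ℤ) ^ n).coeff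
      (Finsupp.equivFunOnFinite.symm fun _ => n) =
    ∑ k ∈ range (n + 1), (n.choose k : ℤ) ^ 2 * ((2 * k).choose k : ℤ) :=
  zagierC_constant_term_general n
end

section
/- For every positive integer n, the coefficient of x^n y^n in the polynomial ((x+1)(y+1)(x+y+1))^n ∈ ℤ[x,y] equals the n-th Apéry number b_n = ∑_{k=0}^{n} C(n,k)^2 C(n+k,k) (Zagier's sporadic sequence D), i.e. the Apéry numbers b_n are the constant term sequence of the Laurent polynomial (x+1)(y+1)(x+y+1)/(xy). -/
/-!
Since `(x+1)(y+1)(x+y+1) = (y+1)((x+1)^2 + y(x+1))`, the binomial theorem gives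
`((x+1)(y+1)(x+y+1))^n = ∑ₖ C(n,k) (x+1)^(n+k) y^(n-k) (y+1)^n`.
The `k`-th summand contributes `C(n,k) · C(n+k,n) · C(n,k)` to the coefficient of `x^n y^n`,
which is read off after identifying `R[x,y]` with `R[y][x]`.
-/

open MvPolynomial Finset

open scoped Polynomial

namespace MvPolynomial

variable {R : Type*} [CommSemiring R]

noncomputable def finTwoAlgEquiv : MvPolynomial (Fin 2) R ≃ₐ[R] R[X][X] :=
  (finSuccEquiv R 1).trans (Polynomial.mapAlgEquiv (uniqueAlgEquiv R (Fin 1)))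

theorem coeff_coeff_finTwoAlgEquiv (f : MvPolynomial (Fin 2) R) (i j : ℕ) :
    ((finTwoAlgEquiv f).coeff i).coeff j = f.coeff (Finsupp.cons i (Finsupp.single 0 j)) := by
  rw [finTwoAlgEquiv, AlgEquiv.trans_apply, Polynomial.coe_mapAlgEquiv, Polynomial.coeff_map,
    RingHom.coe_coe, coeff_uniqueAlgEquiv, finSuccEquiv_coeff_coeff]
  rfl

theorem finTwoAlgEquiv_X_zero : finTwoAlgEquiv (X 0 : MvPolynomial (Fin 2) R) = Polynomial.X := by
  simp [finTwoAlgEquiv, finSuccEquiv_X_zero]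

theorem finTwoAlgEquiv_X_one :
    finTwoAlgEquiv (X 1 : MvPolynomial (Fin 2) R) = Polynomial.C Polynomial.X := by
  rw [show (1 : Fin 2) = Fin.succ 0 from rfl, finTwoAlgEquiv, AlgEquiv.trans_apply,
    finSuccEquiv_X_succ]
  simp

end MvPolynomial

theorem add_one_mul_add_one_mul_add_add_one_pow_eq_sum {A : Type*} [CommSemiring A] (x y : A)
    (n : ℕ) :
    ((x + 1) * (y + 1) * (x + y + 1)) ^ n =
      ∑ k ∈ range (n + 1),
        (n.choose k : A) * (x + 1) ^ (n + k) * (y ^ (n - k) * (y + 1) ^ n) := by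
  have hsplit : (x + 1) * (y + 1) * (x + y + 1) = ((x + 1) ^ 2 + y * (x + 1)) * (y + 1) := by ring
  rw [hsplit, mul_pow, add_pow, sum_mul]
  refine sum_congr rfl fun k hk => ?_
  obtain ⟨m, rfl⟩ := Nat.exists_eq_add_of_le (Nat.lt_succ_iff.mp (mem_range.mp hk))
  rw [Nat.add_sub_cancel_left, mul_pow y, ← pow_mul]
  ring

namespace Polynomial

theorem coeff_coeff_choose_mul_X_add_one_pow_mul {R : Type*} [CommSemiring R] {n k : ℕ}
    (hk : k ≤ n) :
    (((n.choose k : R[X][X]) * (X + 1) ^ (n + k) * (C X ^ (n - k) * (C X + 1) ^ n)).coeff n).coeff n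
      =
      ((n.choose k) ^ 2 * (n + k).choose k : R) := by
  have hy : (C X ^ (n - k) * (C X + 1) ^ n : R[X][X]) = C (X ^ (n - k) * (X + 1) ^ n) := by
    simp
  rw [hy, coeff_mul_C, ← C_eq_natCast, coeff_C_mul, coeff_X_add_one_pow, ← Nat.cast_mul,
    ← C_eq_natCast, coeff_C_mul, coeff_X_pow_mul', if_pos (Nat.sub_le n k), Nat.sub_sub_self hk,
    coeff_X_add_one_pow, Nat.choose_symm_add]
  push_cast
  ring

end Polynomial

theorem apery2_constant_term_general (n : ℕ) :
    (((X 0 + 1) * (X 1 + 1) * (X 0 + X 1 + 1) : MvPolynomial (Fin 2) ℤ) ^ n).coeff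
      (Finsupp.equivFunOnFinite.symm fun _ => n) =
    ∑ k ∈ range (n + 1), (n.choose k : ℤ) ^ 2 * ((n + k).choose k : ℤ) := by
  have hdiag : (Finsupp.equivFunOnFinite.symm fun _ => n : Fin 2 →₀ ℕ) =
      Finsupp.cons n (Finsupp.single 0 n) := by
    ext i
    fin_cases i <;> simp [Finsupp.cons]
  rw [hdiag, ← coeff_coeff_finTwoAlgEquiv]
  simp only [map_pow, map_mul, map_add, map_one, finTwoAlgEquiv_X_zero, finTwoAlgEquiv_X_one]
  rw [add_one_mul_add_one_mul_add_add_one_pow_eq_sum, Polynomial.finsetSum_coeff,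
    Polynomial.finsetSum_coeff]
  exact sum_congr rfl fun k hk =>
    Polynomial.coeff_coeff_choose_mul_X_add_one_pow_mul (Nat.lt_succ_iff.mp (mem_range.mp hk))

/-- The Apéry numbers `b_n = ∑_{k=0}^n C(n,k)² C(n+k,k)` (Zagier's sporadic sequence D)
form the constant term sequence of the Laurent polynomial `(x+1)(y+1)(x+y+1)/(xy)`:
the coefficient of `x^n y^n` in `((x+1)(y+1)(x+y+1))^n` equals `b_n`. -/
theorem apery2_constant_term (n : ℕ) (hn : 0 < n) :
    (((X 0 + 1) * (X 1 + 1) * (X 0 + X 1 + 1) : MvPolynomial (Fin 2) ℤ) ^ n).coeff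
      (Finsupp.equivFunOnFinite.symm fun _ => n) =
    ∑ k ∈ range (n + 1), (n.choose k : ℤ) ^ 2 * ((n + k).choose k : ℤ) :=
  apery2_constant_term_general n
end

section
/- For every positive integer n, the coefficient of x^n y^n in the polynomial ((xy+x+y-1)(xy-x-y-1))^n ∈ ℤ[x,y] equals (-1)^n E_n, where E_n = ∑_{k=0}^{⌊n/2⌋} 4^{n-2k} C(n,2k) C(2k,k)^2 is Zagier's sporadic sequence E. (Equivalently, E is the constant term sequence of the Laurent polynomial (xy+x+y-1)(xy-x-y-1)/(-xy).) -/
open MvPolynomial Finset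

/-- Zagier's sporadic sequence E. -/
def zagierE (n : ℕ) : ℤ :=
  ∑ k ∈ range (n / 2 + 1),
    4 ^ (n - 2 * k) * (n.choose (2 * k) : ℤ) * ((2 * k).choose k : ℤ) ^ 2

/-!
Write `(xy+x+y-1)(xy-x-y-1) = (x²-1)(y²-1) - 4xy` and expand binomially. The `j`-th term is
`C(n,j) (-4)^(n-j) r(x) r(y)` with `r = (X²-1)^j X^(n-j)`, so its coefficient of `x^n y^n` is the
square of the coefficient of `X^j` in `(X²-1)^j = expand 2 ((X-1)^j)`. That coefficient vanishes
for odd `j` and is `±C(2k,k)` for `j = 2k`, which leaves the sum defining `E_n`.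
-/

theorem Finsupp.equivFunOnFinite_symm_fin_two {M : Type*} [AddCommMonoid M] (f : Fin 2 → M) :
    Finsupp.equivFunOnFinite.symm f = single 0 (f 0) + single 1 (f 1) := by
  ext i
  fin_cases i <;> simp

theorem Finsupp.single_add_single_inj {σ M : Type*} [AddCommMonoid M] {s t : σ} (hst : s ≠ t)
    {a b c d : M} :
    single s a + single t b = single s c + single t d ↔ a = c ∧ b = d := by
  refine ⟨fun h => ⟨?_, ?_⟩, fun ⟨hac, hbd⟩ => hac ▸ hbd ▸ rfl⟩
  · simpa [hst.symm] using DFunLike.congr_fun h s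
  · simpa [hst] using DFunLike.congr_fun h t

theorem Finset.sum_range_succ_ite_two_dvd {M : Type*} [AddCommMonoid M] (f : ℕ → M) (n : ℕ) :
    ∑ j ∈ range (n + 1), (if 2 ∣ j then f j else 0) = ∑ k ∈ range (n / 2 + 1), f (2 * k) := by
  rw [← sum_filter]
  symm
  refine sum_nbij' (2 * ·) (· / 2) ?_ ?_ ?_ ?_ fun _ _ => rfl <;>
    simp only [mem_filter, mem_range] <;> omega

theorem Polynomial.coeff_X_sq_sub_one_pow {R : Type*} [CommRing R] (j m : ℕ) :
    ((Polynomial.X ^ 2 - 1 : Polynomial R) ^ j).coeff m =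
      if 2 ∣ m then (-1) ^ (j - m / 2) * (j.choose (m / 2) : R) else 0 := by
  have : (Polynomial.X ^ 2 - 1 : Polynomial R) ^ j =
      Polynomial.expand R 2 ((Polynomial.X + Polynomial.C (-1)) ^ j) := by
    simp [sub_eq_add_neg]
  rw [this, Polynomial.coeff_expand two_pos, Polynomial.coeff_X_add_C_pow]

theorem MvPolynomial.coeff_aeval_X_mul_aeval_X {R σ : Type*} [CommSemiring R] {s t : σ}
    (hst : s ≠ t) (p q : Polynomial R) (a b : ℕ) :
    (Polynomial.aeval (X s) p * Polynomial.aeval (X t) q : MvPolynomial σ R).coeff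
      (Finsupp.single s a + Finsupp.single t b) = p.coeff a * q.coeff b := by
  classical
  induction p using Polynomial.induction_on' with
  | add p p' hp hp' => rw [map_add, add_mul, coeff_add, hp, hp', Polynomial.coeff_add, add_mul]
  | monomial i c =>
    induction q using Polynomial.induction_on' with
    | add q q' hq hq' => rw [map_add, mul_add, coeff_add, hq, hq', Polynomial.coeff_add, mul_add]
    | monomial k d =>
      simp only [Polynomial.aeval_monomial, algebraMap_eq, C_mul_X_pow_eq_monomial, monomial_mul,
        coeff_monomial, Finsupp.single_add_single_inj hst, Polynomial.coeff_monomial, ite_and]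
      split_ifs <;> simp

theorem coeff_diagonal_binomial_term (n j : ℕ) (hj : j ≤ n) :
    (((X 0 ^ 2 - 1) * (X 1 ^ 2 - 1) : MvPolynomial (Fin 2) ℤ) ^ j * (-4 * (X 0 * X 1)) ^ (n - j) *
        (n.choose j : MvPolynomial (Fin 2) ℤ)).coeff (Finsupp.single 0 n + Finsupp.single 1 n) =
      if 2 ∣ j then (-1) ^ n * (4 ^ (n - j) * n.choose j * (j.choose (j / 2) : ℤ) ^ 2) else 0 := by
  set r : Polynomial ℤ := (Polynomial.X ^ 2 - 1) ^ j * Polynomial.X ^ (n - j)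
  have hsplit : ((X 0 ^ 2 - 1) * (X 1 ^ 2 - 1) : MvPolynomial (Fin 2) ℤ) ^ j *
      (-4 * (X 0 * X 1)) ^ (n - j) * (n.choose j : MvPolynomial (Fin 2) ℤ) =
      C ((-4 : ℤ) ^ (n - j) * n.choose j) *
        (Polynomial.aeval (X 0) r * Polynomial.aeval (X 1) r) := by
    simp only [r, map_mul, map_pow, map_sub, map_one, Polynomial.aeval_X, map_neg, map_natCast,
      map_ofNat, mul_pow]
    ring
  have hr : r.coeff n = ((Polynomial.X ^ 2 - 1 : Polynomial ℤ) ^ j).coeff j := by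
    conv_lhs => rw [← Nat.add_sub_cancel' hj]
    exact Polynomial.coeff_mul_X_pow _ _ _
  rw [hsplit, coeff_C_mul, coeff_aeval_X_mul_aeval_X (by decide), hr,
    Polynomial.coeff_X_sq_sub_one_pow]
  split_ifs with hj2
  · obtain ⟨k, rfl⟩ := hj2
    obtain ⟨m, rfl⟩ := Nat.exists_eq_add_of_le hj
    have hk : 2 * k - k = k := by omega
    have hsq : ((-1 : ℤ) ^ k) ^ 2 = 1 := by rw [← pow_mul', pow_mul, neg_one_sq, one_pow]
    rw [Nat.add_sub_cancel_left, Nat.mul_div_cancel_left k two_pos, hk, neg_pow 4, pow_add,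
      pow_mul, neg_one_sq, one_pow]
    linear_combination (-1 : ℤ) ^ m * 4 ^ m * ((2 * k + m).choose (2 * k) : ℤ) *
      ((2 * k).choose k : ℤ) ^ 2 * hsq
  · simp

theorem zagierE_constant_term_general (n : ℕ) :
    (((X 0 * X 1 + X 0 + X 1 - 1) * (X 0 * X 1 - X 0 - X 1 - 1) :
        MvPolynomial (Fin 2) ℤ) ^ n).coeff
      (Finsupp.equivFunOnFinite.symm fun _ => n) = (-1) ^ n * zagierE n := by
  have hP : ((X 0 * X 1 + X 0 + X 1 - 1) * (X 0 * X 1 - X 0 - X 1 - 1) : MvPolynomial (Fin 2) ℤ) =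
      (X 0 ^ 2 - 1) * (X 1 ^ 2 - 1) + -4 * (X 0 * X 1) := by ring
  rw [hP, add_pow, Finsupp.equivFunOnFinite_symm_fin_two, coeff_sum,
    sum_congr rfl fun j hj =>
      coeff_diagonal_binomial_term n j (Nat.lt_succ_iff.mp (mem_range.mp hj)),
    sum_range_succ_ite_two_dvd, zagierE, mul_sum]
  refine sum_congr rfl fun k _ => ?_
  rw [Nat.mul_div_cancel_left k two_pos]

/-- Zagier's sporadic sequence E is the constant term sequence of the Laurent polynomial
`(xy+x+y-1)(xy-x-y-1)/(-xy)`: the coefficient of `x^n y^n` in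
`((xy+x+y-1)(xy-x-y-1))^n` equals `(-1)^n E_n`. -/
theorem zagierE_constant_term (n : ℕ) (hn : 0 < n) :
    (((X 0 * X 1 + X 0 + X 1 - 1) * (X 0 * X 1 - X 0 - X 1 - 1) :
        MvPolynomial (Fin 2) ℤ) ^ n).coeff
      (Finsupp.equivFunOnFinite.symm fun _ => n) = (-1) ^ n * zagierE n :=
  zagierE_constant_term_general n
end

section
/- For every positive integer n, the coefficient of x^n y^n z^n in the polynomial ((y+z)(x+1)(x+y+1)(x+y+z))^n ∈ ℤ[x,y,z] equals the n-th Apéry number a_n = ∑_{k=0}^{n} C(n,k)^2 C(n+k,k)^2, i.e. the Apéry numbers a_n (sporadic sequence (γ)) form the constant term sequence of the Laurent polynomial (y+z)(x+1)(x+y+1)(x+y+z)/(xyz). -/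
/-!
Write `(x+y+1)^n = ∑ C(n,m) (x+y)^m` and `(x+y+z)^n = ∑ C(n,p) (x+y)^p z^(n-p)`, and expand
`(y+z)^n`, `(x+1)^n` and `(x+y)^(m+p)` binomially. Matching the exponent of `z` forces the term
`y^(n-p) z^p` of `(y+z)^n`, after which the exponents of `x` and `y` leave a single term of
`(x+y)^(m+p)`, so the coefficient of `x^n y^n z^n` is `∑_{m,p} C(n,m)² C(n,p)² C(m+p,m)`.
Vandermonde gives `C(m+p,m) = ∑_a C(m,a) C(p,a)`, which factors this double sum as `∑_a S_a²`
with `S_a = ∑_p C(n,p)² C(p,a) = C(n,a) C(2n-a,n)` (from `C(n,p) C(p,a) = C(n,a) C(n-a,p-a)` and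
Vandermonde again); reflecting `a ↦ n - a` turns `∑_a S_a²` into the Apéry number.
-/

open MvPolynomial Finset

namespace Nat

theorem add_choose_left_eq_sum_choose_mul_choose {m N : ℕ} (p : ℕ) (hm : m ≤ N) :
    (m + p).choose m = ∑ a ∈ range (N + 1), m.choose a * p.choose a := by
  rw [add_choose_eq, Finset.Nat.sum_antidiagonal_eq_sum_range_succ_mk, ← sum_range_reflect]
  refine (sum_congr rfl fun a ha => ?_).trans
    (sum_subset (range_subset_range.2 (by omega)) fun a _ ha => ?_)
  · rw [mem_range] at ha
    rw [show m + 1 - 1 - a = m - a by omega, choose_symm (by omega), Nat.sub_sub_self (by omega)]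
  · rw [choose_eq_zero_of_lt (by simpa using ha), zero_mul]

theorem sum_choose_sq_mul_choose (n a : ℕ) :
    ∑ p ∈ range (n + 1), n.choose p ^ 2 * p.choose a = n.choose a * (2 * n - a).choose n := by
  rcases lt_or_ge n a with hna | han
  · rw [choose_eq_zero_of_lt hna, zero_mul]
    exact sum_eq_zero fun p hp => by
      rw [choose_eq_zero_of_lt (show p < a by rw [mem_range] at hp; omega), mul_zero]
  obtain ⟨b, rfl⟩ := exists_add_of_le han
  have hvandermonde :
      (b + (a + b)).choose b = ∑ q ∈ range (b + 1), (a + b).choose (a + q) * b.choose q := by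
    rw [add_choose_eq, Finset.Nat.sum_antidiagonal_eq_sum_range_succ_mk]
    refine sum_congr rfl fun q hq => ?_
    rw [mem_range] at hq
    rw [mul_comm, choose_symm_of_eq_add (show a + b = b - q + (a + q) by omega)]
  calc ∑ p ∈ range (a + b + 1), (a + b).choose p ^ 2 * p.choose a
      = ∑ q ∈ range (b + 1), (a + b).choose (a + q) ^ 2 * (a + q).choose a := by
        rw [add_assoc, sum_range_add, sum_eq_zero fun p hp => ?_, zero_add]
        rw [choose_eq_zero_of_lt (mem_range.1 hp), mul_zero]
    _ = (a + b).choose a * ∑ q ∈ range (b + 1), (a + b).choose (a + q) * b.choose q := by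
        rw [mul_sum]
        refine sum_congr rfl fun q _ => ?_
        rw [sq, mul_assoc, choose_mul (by omega)]
        simp only [Nat.add_sub_cancel_left]
        ring
    _ = (a + b).choose a * (2 * (a + b) - a).choose (a + b) := by
        rw [← hvandermonde, show 2 * (a + b) - a = b + (a + b) by omega]
        exact congrArg _ choose_symm_add

theorem sum_choose_sq_mul_choose_sq_mul_add_choose (n : ℕ) :
    ∑ m ∈ range (n + 1), ∑ p ∈ range (n + 1),
        n.choose m ^ 2 * n.choose p ^ 2 * (m + p).choose m =
      ∑ k ∈ range (n + 1), n.choose k ^ 2 * (n + k).choose k ^ 2 := by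
  calc _ = ∑ a ∈ range (n + 1), (∑ m ∈ range (n + 1), n.choose m ^ 2 * m.choose a) *
        ∑ p ∈ range (n + 1), n.choose p ^ 2 * p.choose a := by
        symm
        simp_rw [sum_mul_sum]
        rw [sum_comm]
        refine sum_congr rfl fun m hm => ?_
        rw [sum_comm]
        refine sum_congr rfl fun p _ => ?_
        rw [add_choose_left_eq_sum_choose_mul_choose p (mem_range_succ_iff.1 hm), mul_sum]
        exact sum_congr rfl fun a _ => by ring
    _ = ∑ a ∈ range (n + 1), (n.choose a * (2 * n - a).choose n) ^ 2 := by
        simp_rw [sum_choose_sq_mul_choose, sq]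
    _ = _ := by
        rw [← sum_range_reflect]
        refine sum_congr rfl fun k hk => ?_
        rw [mem_range] at hk
        rw [show n + 1 - 1 - k = n - k by omega, show 2 * n - (n - k) = n + k by omega,
          choose_symm (by omega), choose_symm_add, mul_pow]

end Nat

theorem apery_product_pow_eq_sum {R : Type*} [CommSemiring R] (x y z : R) (n : ℕ) :
    ((y + z) * (x + 1) * (x + y + 1) * (x + y + z)) ^ n =
      ∑ m ∈ range (n + 1), ∑ p ∈ range (n + 1), ∑ j ∈ range (n + 1), ∑ k ∈ range (n + 1),
        ∑ d ∈ range (m + p + 1),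
          ((n.choose m * n.choose p * n.choose j * n.choose k * (m + p).choose d : ℕ) : R) *
            (x ^ (k + d) * y ^ (j + (m + p - d)) * z ^ (n - j + (n - p))) := by
  have hxy1 : (x + y + 1) ^ n = ∑ m ∈ range (n + 1), (x + y) ^ m * n.choose m := by
    simpa using add_pow (x + y) 1 n
  have hx1 : (x + 1) ^ n = ∑ k ∈ range (n + 1), x ^ k * n.choose k := by
    simpa using add_pow x 1 n
  rw [show (y + z) * (x + 1) * (x + y + 1) * (x + y + z) =
      (x + 1) * (y + z) * ((x + y + z) * (x + y + 1)) by ring,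
    mul_pow, mul_pow, mul_pow, hxy1, add_pow (x + y) z, add_pow y z, hx1]
  simp only [sum_mul, mul_sum]
  refine sum_congr rfl fun m _ => sum_congr rfl fun p _ => sum_congr rfl fun j _ =>
    sum_congr rfl fun k _ => ?_
  calc _ = (n.choose m * n.choose p * n.choose j * n.choose k : R) *
        (x ^ k * y ^ j * z ^ (n - j + (n - p))) * (x + y) ^ (m + p) := by ring
    _ = _ := by
      rw [add_pow, mul_sum]
      refine sum_congr rfl fun d _ => ?_
      push_cast
      ring

theorem coeff_X_pow_mul_X_pow_mul_X_pow {R : Type*} [CommSemiring R] (e : Fin 3 → ℕ)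
    (a b c : ℕ) :
    coeff (Finsupp.equivFunOnFinite.symm e)
        (X 0 ^ a * X 1 ^ b * X 2 ^ c : MvPolynomial (Fin 3) R) =
      if a = e 0 ∧ b = e 1 ∧ c = e 2 then 1 else 0 := by
  rw [X_pow_eq_monomial, X_pow_eq_monomial, X_pow_eq_monomial, monomial_mul, monomial_mul,
    coeff_monomial]
  simp [Finsupp.ext_iff, Fin.forall_fin_succ]

theorem coeff_apery_product_pow (n : ℕ) :
    (((X 1 + X 2) * (X 0 + 1) * (X 0 + X 1 + 1) * (X 0 + X 1 + X 2) :
        MvPolynomial (Fin 3) ℤ) ^ n).coeff (Finsupp.equivFunOnFinite.symm fun _ => n) =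
      ∑ m ∈ range (n + 1), ∑ p ∈ range (n + 1),
        ((n.choose m ^ 2 * n.choose p ^ 2 * (m + p).choose m : ℕ) : ℤ) := by
  rw [apery_product_pow_eq_sum]
  simp only [coeff_sum, ← nsmul_eq_mul, coeff_smul, coeff_X_pow_mul_X_pow_mul_X_pow]
  refine sum_congr rfl fun m hm => sum_congr rfl fun p hp => ?_
  rw [mem_range_succ_iff] at hm hp
  calc _ = ∑ j ∈ range (n + 1), ∑ k ∈ range (n + 1), ∑ d ∈ range (m + p + 1),
        if d = m ∧ k = n - m ∧ j = n - p then
          ((n.choose m * n.choose p * n.choose j * n.choose k * (m + p).choose d : ℕ) : ℤ)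
        else 0 := by
        refine sum_congr rfl fun j hj => sum_congr rfl fun k _ => sum_congr rfl fun d hd => ?_
        rw [mem_range_succ_iff] at hj hd
        rw [smul_ite, nsmul_eq_mul, mul_one, smul_zero]
        exact if_congr (by omega) rfl rfl
    _ = _ := by
        simp only [ite_and, sum_ite_eq', mem_range, if_pos (show m < m + p + 1 by omega),
          if_pos (show n - m < n + 1 by omega), if_pos (show n - p < n + 1 by omega),
          Nat.choose_symm hm, Nat.choose_symm hp]
        congr 1
        ring

theorem apery3_constant_term_general (n : ℕ) :
    (((X 1 + X 2) * (X 0 + 1) * (X 0 + X 1 + 1) * (X 0 + X 1 + X 2) :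
        MvPolynomial (Fin 3) ℤ) ^ n).coeff
      (Finsupp.equivFunOnFinite.symm fun _ => n) =
    ∑ k ∈ range (n + 1), (n.choose k : ℤ) ^ 2 * ((n + k).choose k : ℤ) ^ 2 := by
  rw [coeff_apery_product_pow]
  exact_mod_cast Nat.sum_choose_sq_mul_choose_sq_mul_add_choose n

/-- The Apéry numbers `a_n = ∑_{k=0}^n C(n,k)² C(n+k,k)²` (sporadic sequence (γ)) form
the constant term sequence of the Laurent polynomial `(y+z)(x+1)(x+y+1)(x+y+z)/(xyz)`:
the coefficient of `x^n y^n z^n` in `((y+z)(x+1)(x+y+1)(x+y+z))^n` equals `a_n`. -/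
theorem apery3_constant_term (n : ℕ) (hn : 0 < n) :
    (((X 1 + X 2) * (X 0 + 1) * (X 0 + X 1 + 1) * (X 0 + X 1 + X 2) :
        MvPolynomial (Fin 3) ℤ) ^ n).coeff
      (Finsupp.equivFunOnFinite.symm fun _ => n) =
    ∑ k ∈ range (n + 1), (n.choose k : ℤ) ^ 2 * ((n + k).choose k : ℤ) ^ 2 :=
  apery3_constant_term_general n
end

section
/- For every positive integer n, the coefficient of x^n y^n z^n in the polynomial ((x+1)(y+1)(z+1)(xyz+1))^n ∈ ℤ[x,y,z] equals the n-th Yang–Zudilin number u_n = ∑_{k=0}^{n} C(n,k)^4, i.e. Cooper's sporadic sequence s_10 is the constant term sequence of the Laurent polynomial (x+1)(y+1)(z+1)(xyz+1)/(xyz). -/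
/-!
Factor the power as `(x+1)ⁿ (y+1)ⁿ (z+1)ⁿ · (xyz+1)ⁿ`. The term `C(n,k) (xyz)ᵏ` of the last
factor reaches `xⁿ yⁿ zⁿ` only together with `xⁿ⁻ᵏ yⁿ⁻ᵏ zⁿ⁻ᵏ` from the first three, whose
coefficient is `C(n,n-k)³ = C(n,k)³`, as the three factors involve disjoint variables.
-/

open MvPolynomial Finset

namespace MvPolynomial

variable {R σ : Type*} [CommSemiring R]

theorem aeval_X_eq_sum_monomial (i : σ) (p : Polynomial R) :
    Polynomial.aeval (X i : MvPolynomial σ R) p =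
      ∑ a ∈ p.support, monomial (Finsupp.single i a) (p.coeff a) := by
  conv_lhs => rw [p.as_sum_support]
  simp only [map_sum, Polynomial.aeval_monomial, algebraMap_eq, X_pow_eq_monomial, C_mul_monomial,
    mul_one]

theorem coeff_prod_aeval_X [Fintype σ] (p : σ → Polynomial R) (g : σ →₀ ℕ) :
    coeff g (∏ i, Polynomial.aeval (X i) (p i)) = ∏ i, (p i).coeff (g i) := by
  classical
  simp only [aeval_X_eq_sum_monomial, prod_univ_sum, ← monomial_sum_prod, coeff_sum,
    coeff_monomial]
  have sum_single_eq_iff (f : σ → ℕ) : ∑ i, Finsupp.single i (f i) = g ↔ f = ⇑g := by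
    rw [← Finsupp.equivFunOnFinite_symm_eq_sum, Equiv.symm_apply_eq]
    rfl
  simp only [sum_single_eq_iff, sum_ite_eq', Fintype.mem_piFinset, Polynomial.mem_support_iff]
  split_ifs with h
  · rfl
  · push Not at h
    obtain ⟨i, hi⟩ := h
    exact (prod_eq_zero (mem_univ i) hi).symm

theorem coeff_mul_monomial_add_one_pow (p : MvPolynomial σ R) (d m : σ →₀ ℕ) (n : ℕ) :
    coeff m (p * (monomial d 1 + 1) ^ n) =
      ∑ k ∈ range (n + 1), if k • d ≤ m then coeff (m - k • d) p * n.choose k else 0 := by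
  simp only [add_pow, monomial_pow, one_pow, mul_one, mul_sum, coeff_sum]
  refine sum_congr rfl fun k _ => ?_
  rw [← C_eq_coe_nat, mul_comm (monomial _ _), C_mul_monomial, mul_one]
  exact coeff_mul_monomial' _ _ _ _

end MvPolynomial

theorem s10_constant_term_general (n : ℕ) :
    (((X 0 + 1) * (X 1 + 1) * (X 2 + 1) * (X 0 * X 1 * X 2 + 1) :
        MvPolynomial (Fin 3) ℤ) ^ n).coeff
      (Finsupp.equivFunOnFinite.symm fun _ => n) =
    ∑ k ∈ range (n + 1), (n.choose k : ℤ) ^ 4 := by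
  set d : Fin 3 →₀ ℕ := Finsupp.equivFunOnFinite.symm fun _ => 1
  have hxyz : (X 0 * X 1 * X 2 : MvPolynomial (Fin 3) ℤ) = monomial d 1 := by
    simp only [d, Finsupp.equivFunOnFinite_symm_eq_sum, monomial_sum_one, Fin.prod_univ_three, X]
  have hfactor : ((X 0 + 1) * (X 1 + 1) * (X 2 + 1) * (X 0 * X 1 * X 2 + 1) :
        MvPolynomial (Fin 3) ℤ) ^ n =
      (∏ i, Polynomial.aeval (X i) ((Polynomial.X + 1 : Polynomial ℤ) ^ n)) *
        (monomial d 1 + 1) ^ n := by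
    simp [Fin.prod_univ_three, hxyz, mul_pow]
  rw [hfactor, coeff_mul_monomial_add_one_pow]
  refine sum_congr rfl fun k hk => ?_
  have hkn : k ≤ n := Nat.lt_succ_iff.mp (mem_range.mp hk)
  have hle : k • d ≤ Finsupp.equivFunOnFinite.symm fun _ => n := fun i => by simpa [d] using hkn
  have hsub : (Finsupp.equivFunOnFinite.symm fun _ => n) - k • d =
      Finsupp.equivFunOnFinite.symm fun _ => n - k := by
    ext i
    simp [d]
  rw [if_pos hle, hsub, coeff_prod_aeval_X]
  simp only [Finsupp.equivFunOnFinite_symm_apply_apply, Polynomial.coeff_X_add_one_pow,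
    Nat.choose_symm hkn, prod_const, card_univ, Fintype.card_fin]
  ring

/-- The Yang–Zudilin numbers `u_n = ∑_{k=0}^n C(n,k)⁴` (Cooper's sporadic sequence s₁₀)
form the constant term sequence of the Laurent polynomial `(x+1)(y+1)(z+1)(xyz+1)/(xyz)`:
the coefficient of `x^n y^n z^n` in `((x+1)(y+1)(z+1)(xyz+1))^n` equals `u_n`. -/
theorem s10_constant_term (n : ℕ) (hn : 0 < n) :
    (((X 0 + 1) * (X 1 + 1) * (X 2 + 1) * (X 0 * X 1 * X 2 + 1) :
        MvPolynomial (Fin 3) ℤ) ^ n).coeff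
      (Finsupp.equivFunOnFinite.symm fun _ => n) =
    ∑ k ∈ range (n + 1), (n.choose k : ℤ) ^ 4 :=
  s10_constant_term_general n
end

section
/- Let S(n) be the set of tuples (a₁,a₂,a₃,b₁,b₂,b₃,c₁,c₂,c₃) of nonnegative integers with a₁+a₂+a₃ = b₁+b₂+b₃ = c₁+c₂+c₃ = n, with aᵢ+bᵢ+cᵢ = n for each i ∈ {1,2,3}, and with 3 dividing b₂+2b₃+2c₂+c₃. Then for every positive integer n, 2·(-1)^n·B_n = 3·∑_{(a,b,c)∈S(n)} C(n;a₁,a₂,a₃)·C(n;b₁,b₂,b₃)·C(n;c₁,c₂,c₃) − C(3n;n,n,n), where B_n = ∑_{k=0}^{⌊n/3⌋} (-1)^k 3^{n-3k} C(n,3k) C(3k,2k) C(2k,k) is Zagier's sporadic sequence B. -/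
open Finset

/-- The multinomial coefficient `C(n; a₁, a₂, a₃) = n! / (a₁! a₂! a₃!)`
(for `a₁ + a₂ + a₃ = n`). -/
def multinom (n : ℕ) (a : Fin 3 → ℕ) : ℤ :=
  (n.factorial / ((a 0).factorial * (a 1).factorial * (a 2).factorial) : ℕ)

/-!
If `ω ^ 2 + ω + 1 = 0` in a commutative ring, then
`(x + y + z) (x + ω y + ω² z) (x + ω² y + ω z) = x³ + y³ + z³ - 3xyz`.
The coefficient of `xⁿyⁿzⁿ` in the `n`-th power of the right-hand side is `(-1)ⁿ Bₙ`, while on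
the left it is the sum over all `(a, b, c)` with row and column sums `n` (no divisibility
condition) of `C(n;a) C(n;b) C(n;c) ω^(b₂ + 2b₃ + 2c₂ + c₃)`. The same sum with `ω` replaced by
`1` is the coefficient of `xⁿyⁿzⁿ` in `(x + y + z)³ⁿ`, namely `C(3n;n,n,n)`. Adding the three
sums for `1, ω, ω²` with `ω` a primitive cube root of unity in `ℂ` keeps exactly the terms whose
exponent is divisible by `3`, each three times: `3 ∑_{S(n)} = C(3n;n,n,n) + 2 (-1)ⁿ Bₙ`.
-/

namespace MvPolynomial

variable {R σ ι : Type*} [CommSemiring R]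

theorem sum_monomial_pow [Fintype ι] [DecidableEq ι] (v : ι → σ →₀ ℕ) (c : ι → R) (n : ℕ) :
    (∑ i, monomial (v i) (c i)) ^ n =
      ∑ k ∈ piAntidiag univ n,
        monomial (∑ i, k i • v i) (Nat.multinomial univ k * ∏ i, c i ^ k i) := by
  rw [sum_pow_eq_sum_piAntidiag]
  refine sum_congr rfl fun k _ => ?_
  simp_rw [monomial_pow, ← monomial_sum_prod, ← C_eq_coe_nat, C_mul_monomial]

theorem coeff_sum_monomial_pow [DecidableEq σ] [Fintype ι] [DecidableEq ι] (v : ι → σ →₀ ℕ)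
    (c : ι → R) (n : ℕ) (m : σ →₀ ℕ) :
    coeff m ((∑ i, monomial (v i) (c i)) ^ n) =
      ∑ k ∈ (piAntidiag univ n).filter (fun k => ∑ i, k i • v i = m),
        Nat.multinomial univ k * ∏ i, c i ^ k i := by
  simp_rw [sum_monomial_pow, coeff_sum, coeff_monomial, sum_filter]

noncomputable def linearForm [Fintype σ] (c : σ → R) : MvPolynomial σ R :=
  ∑ i, C (c i) * X i

theorem linearForm_pow [Fintype σ] [DecidableEq σ] (c : σ → R) (n : ℕ) :
    linearForm c ^ n =
      ∑ k ∈ piAntidiag univ n,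
        monomial (Finsupp.equivFunOnFinite.symm k) (Nat.multinomial univ k * ∏ i, c i ^ k i) := by
  simp_rw [linearForm, C_mul_X_eq_monomial, sum_monomial_pow, Finsupp.smul_single, smul_eq_mul,
    mul_one, ← Finsupp.equivFunOnFinite_symm_eq_sum]

theorem coeff_linearForm_pow_mul_pow_mul_pow [Fintype σ] [DecidableEq σ] (c d e : σ → R)
    (p q r : ℕ) (m : σ → ℕ) :
    coeff (Finsupp.equivFunOnFinite.symm m)
        (linearForm c ^ p * linearForm d ^ q * linearForm e ^ r) =
      ∑ t ∈ (piAntidiag univ p ×ˢ piAntidiag univ q ×ˢ piAntidiag univ r).filter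
          (fun t => t.1 + t.2.1 + t.2.2 = m),
        (Nat.multinomial univ t.1 * ∏ i, c i ^ t.1 i) *
          (Nat.multinomial univ t.2.1 * ∏ i, d i ^ t.2.1 i) *
          (Nat.multinomial univ t.2.2 * ∏ i, e i ^ t.2.2 i) := by
  rw [mul_assoc, linearForm_pow, linearForm_pow, linearForm_pow, sum_mul_sum, ← sum_product',
    sum_mul_sum, ← sum_product', coeff_sum, sum_filter]
  refine sum_congr rfl fun t _ => ?_
  rw [monomial_mul, monomial_mul, coeff_monomial, ← mul_assoc]
  congr 1
  simp only [Finsupp.ext_iff, _root_.funext_iff, Finsupp.coe_add, Pi.add_apply,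
    Finsupp.coe_equivFunOnFinite_symm, add_assoc]

end MvPolynomial

theorem Nat.multinomial_univ_fin_four (a b c d : ℕ) :
    Nat.multinomial univ ![a, b, c, d] =
      (a + b + c + d).choose (a + b + c) * (a + b + c).choose (a + b) * (a + b).choose a := by
  rw [show (univ : Finset (Fin 4)) = {3, 2, 1, 0} by decide,
    Nat.multinomial_insert (by decide), Nat.multinomial_insert (by decide),
    Nat.multinomial_insert (by decide), Nat.multinomial_singleton]
  simp only [Nat.succ_eq_add_one, Nat.reduceAdd, Fin.isValue, Matrix.cons_val, mem_insert,
    Fin.reduceEq, mem_singleton, or_self, not_false_eq_true, sum_insert, one_ne_zero,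
    Matrix.cons_val_one, Matrix.cons_val_zero, sum_singleton, mul_one]
  rw [Nat.choose_symm_add, Nat.choose_symm_add, Nat.choose_symm_add]
  ring_nf

namespace ZagierB

open MvPolynomial

variable {R : Type*} [CommRing R]

theorem neg_three_pow_sub (n j : ℕ) (h : 3 * j ≤ n) :
    (-3 : R) ^ (n - 3 * j) = (-1) ^ n * ((-1) ^ j * 3 ^ (n - 3 * j)) := by
  obtain ⟨m, rfl⟩ := Nat.exists_eq_add_of_le' h
  rw [Nat.add_sub_cancel, show (-3 : R) = -1 * 3 by norm_num, mul_pow]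
  rcases neg_one_pow_eq_or R j with hj | hj <;> rw [pow_add, pow_mul', hj] <;> ring

noncomputable def cubicExponent : Fin 4 → Fin 3 →₀ ℕ :=
  ![.single 0 3, .single 1 3, .single 2 3, .single 0 1 + .single 1 1 + .single 2 1]

theorem cubic_eq_sum_monomial :
    (X 0 ^ 3 + X 1 ^ 3 + X 2 ^ 3 - 3 * (X 0 * X 1 * X 2) : MvPolynomial (Fin 3) R) =
      ∑ i, monomial (cubicExponent i) (![1, 1, 1, -3] i) := by
  simp only [Fin.sum_univ_four, cubicExponent, Matrix.cons_val_zero, Matrix.cons_val_one,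
    Matrix.cons_val, monomial_add_single, ← C_mul_X_pow_eq_monomial, map_one, map_neg, map_ofNat]
  ring

theorem sum_smul_cubicExponent_eq_iff (k : Fin 4 → ℕ) (n : ℕ) :
    ∑ i, k i • cubicExponent i = Finsupp.equivFunOnFinite.symm (fun _ => n) ↔
      3 * k 0 + k 3 = n ∧ 3 * k 1 + k 3 = n ∧ 3 * k 2 + k 3 = n := by
  simp [Finsupp.ext_iff, Fin.forall_fin_succ, Fin.sum_univ_four, cubicExponent, mul_comm]

theorem filter_cubicExponent_eq_image (n : ℕ) :
    (piAntidiag univ n).filter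
        (fun k => ∑ i, k i • cubicExponent i = Finsupp.equivFunOnFinite.symm fun _ => n) =
      (range (n / 3 + 1)).image fun j => ![j, j, j, n - 3 * j] := by
  ext k
  rw [mem_filter, sum_smul_cubicExponent_eq_iff, mem_piAntidiag, mem_image]
  simp only [Fin.sum_univ_four, mem_univ, implies_true, and_true, mem_range]
  constructor
  · rintro ⟨-, h0, h1, h2⟩
    refine ⟨k 0, by omega, ?_⟩
    ext i
    fin_cases i <;>
      simp only [Fin.zero_eta, Fin.mk_one, Fin.reduceFinMk, Fin.isValue, Matrix.cons_val_zero,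
        Matrix.cons_val_one, Matrix.cons_val] <;> omega
  · rintro ⟨j, hj, rfl⟩
    simp only [Matrix.cons_val_zero, Matrix.cons_val_one, Matrix.cons_val, and_self]
    omega

theorem coeff_cubic_pow (n : ℕ) :
    coeff (Finsupp.equivFunOnFinite.symm fun _ => n)
      ((X 0 ^ 3 + X 1 ^ 3 + X 2 ^ 3 - 3 * (X 0 * X 1 * X 2) : MvPolynomial (Fin 3) R) ^ n) =
      (-1) ^ n * zagierB n := by
  rw [cubic_eq_sum_monomial, coeff_sum_monomial_pow, filter_cubicExponent_eq_image,
    sum_image fun i _ j _ h => congrFun h 0, zagierB]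
  push_cast
  rw [mul_sum]
  refine sum_congr rfl fun j hj => ?_
  have h3j : 3 * j ≤ n := by have := mem_range.1 hj; omega
  rw [Nat.multinomial_univ_fin_four, Fin.prod_univ_four]
  simp only [Matrix.cons_val_zero, Matrix.cons_val_one, Matrix.cons_val, one_pow, one_mul]
  rw [show j + j + j + (n - 3 * j) = n by omega, show j + j + j = 3 * j by ring,
    show j + j = 2 * j by ring, neg_three_pow_sub n j h3j]
  push_cast
  ring

theorem linearForm_mul_linearForm_mul_linearForm {w : R} (hw : w ^ 2 + w + 1 = 0) :
    linearForm ![1, 1, 1] * linearForm ![1, w, w ^ 2] * linearForm ![1, w ^ 2, w] =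
      (X 0 ^ 3 + X 1 ^ 3 + X 2 ^ 3 - 3 * (X 0 * X 1 * X 2) : MvPolynomial (Fin 3) R) := by
  simp only [linearForm, Fin.sum_univ_three, Matrix.cons_val_zero, Matrix.cons_val_one,
    Matrix.cons_val, map_one, one_mul, map_pow]
  have hCw : C w ^ 2 + C w + 1 = (0 : MvPolynomial (Fin 3) R) := by
    rw [← map_pow, ← map_add, ← map_one C, ← map_add, hw, map_zero]
  linear_combination (C w ^ 2 * (X 0 * X 1 * X 2 + X 1 ^ 2 * X 2 + X 1 * X 2 ^ 2) +
    C w * (X 0 * X 1 ^ 2 + X 0 * X 2 ^ 2 + X 1 ^ 3 + X 2 ^ 3 - X 0 * X 1 * X 2) +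
    (X 0 ^ 2 * X 1 + 3 * X 0 * X 1 * X 2 + X 0 ^ 2 * X 2 - X 1 ^ 3 - X 2 ^ 3)) * hCw

abbrev Triple := (Fin 3 → ℕ) × (Fin 3 → ℕ) × (Fin 3 → ℕ)

def balancedTriples (n : ℕ) : Finset Triple :=
  (piAntidiag (univ : Finset (Fin 3)) n ×ˢ piAntidiag univ n ×ˢ piAntidiag univ n).filter
    fun t => t.1 + t.2.1 + t.2.2 = fun _ => n

theorem mem_balancedTriples {n : ℕ} {t : Triple} :
    t ∈ balancedTriples n ↔ (∑ i, t.1 i = n) ∧ (∑ i, t.2.1 i = n) ∧ (∑ i, t.2.2 i = n) ∧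
      ∀ i, t.1 i + t.2.1 i + t.2.2 i = n := by
  simp only [balancedTriples, mem_filter, mem_product, mem_piAntidiag, mem_univ, implies_true,
    and_true, funext_iff, Pi.add_apply, and_assoc]

def weight (t : Triple) : ℕ :=
  Nat.multinomial univ t.1 * Nat.multinomial univ t.2.1 * Nat.multinomial univ t.2.2

def phase (t : Triple) : ℕ := t.2.1 1 + 2 * t.2.1 2 + 2 * t.2.2 1 + t.2.2 2

theorem sum_weight_mul_pow_phase {w : R} (hw : w ^ 2 + w + 1 = 0) (n : ℕ) :
    ∑ t ∈ balancedTriples n, (weight t : R) * w ^ phase t = (-1) ^ n * zagierB n := by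
  rw [← coeff_cubic_pow, ← linearForm_mul_linearForm_mul_linearForm hw, mul_pow, mul_pow,
    coeff_linearForm_pow_mul_pow_mul_pow]
  refine sum_congr rfl fun t _ => ?_
  simp only [weight, phase, Fin.prod_univ_three, Matrix.cons_val_zero, Matrix.cons_val_one,
    Matrix.cons_val, one_pow, mul_one]
  push_cast
  ring

theorem sum_weight (n : ℕ) :
    ∑ t ∈ balancedTriples n, weight t = Nat.multinomial univ fun _ : Fin 3 => n := by
  have h := coeff_linearForm_pow_mul_pow_mul_pow (σ := Fin 3) (R := ℕ) 1 1 1 n n n fun _ => n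
  rw [← pow_add, ← pow_add, linearForm_pow, coeff_sum] at h
  simp only [coeff_monomial, EquivLike.apply_eq_iff_eq, Pi.one_apply, one_pow, prod_const_one,
    mul_one, Nat.cast_id, sum_ite_eq'] at h
  rw [if_pos (mem_piAntidiag.2 ⟨by rw [Fin.sum_univ_three], fun i _ => mem_univ i⟩)] at h
  exact h.symm

theorem one_add_pow_add_sq_pow {w : R} (hw : w ^ 2 + w + 1 = 0) (e : ℕ) :
    1 + w ^ e + (w ^ 2) ^ e = if 3 ∣ e then 3 else 0 := by
  have hw3 : w ^ 3 = 1 := by linear_combination (w - 1) * hw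
  rw [pow_eq_pow_mod e hw3, pow_eq_pow_mod e (by rw [← pow_mul, mul_comm, pow_mul, hw3, one_pow])]
  simp only [Nat.dvd_iff_mod_eq_zero]
  have hr := Nat.mod_lt e three_pos
  interval_cases e % 3
  · norm_num
  · simp only [pow_one, one_ne_zero, if_false]
    linear_combination hw
  · simp only [OfNat.ofNat_ne_zero, if_false]
    linear_combination (w ^ 2 - w + 1) * hw

theorem three_mul_sum_weight_filter_phase (n : ℕ) :
    3 * ∑ t ∈ (balancedTriples n).filter (fun t => 3 ∣ phase t), (weight t : ℤ) =
      Nat.multinomial univ (fun _ : Fin 3 => n) + 2 * ((-1) ^ n * zagierB n) := by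
  obtain ⟨ω, hω⟩ : ∃ ω : ℂ, ω ^ 2 + ω + 1 = 0 := by
    have h := (Complex.isPrimitiveRoot_exp 3 three_ne_zero).geom_sum_eq_zero (by norm_num)
    rw [sum_range_succ, sum_range_succ, sum_range_one, pow_zero, pow_one] at h
    exact ⟨_, by linear_combination h⟩
  have hω2 : (ω ^ 2) ^ 2 + ω ^ 2 + 1 = 0 := by linear_combination (ω ^ 2 - ω + 1) * hω
  apply Int.cast_injective (α := ℂ)
  push_cast
  calc (3 : ℂ) * ∑ t ∈ (balancedTriples n).filter (fun t => 3 ∣ phase t), (weight t : ℂ)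
      = ∑ t ∈ balancedTriples n, (weight t : ℂ) * (1 + ω ^ phase t + (ω ^ 2) ^ phase t) := by
        simp_rw [one_add_pow_add_sq_pow hω, mul_ite, mul_zero, ← sum_filter, mul_sum, mul_comm]
    _ = ∑ t ∈ balancedTriples n, (weight t : ℂ) +
          ∑ t ∈ balancedTriples n, (weight t : ℂ) * ω ^ phase t +
          ∑ t ∈ balancedTriples n, (weight t : ℂ) * (ω ^ 2) ^ phase t := by
        simp only [mul_add, mul_one, sum_add_distrib]
    _ = _ := by
        rw [sum_weight_mul_pow_phase hω, sum_weight_mul_pow_phase hω2, ← Nat.cast_sum, sum_weight]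
        ring

theorem multinom_eq_multinomial {n : ℕ} {a : Fin 3 → ℕ} (h : ∑ i, a i = n) :
    multinom n a = Nat.multinomial univ a := by
  rw [multinom, Nat.multinomial, h, Fin.prod_univ_three]

theorem multinom_mul_multinom_mul_multinom_eq_weight {n : ℕ} {t : Triple}
    (ht : t ∈ balancedTriples n) :
    multinom n t.1 * multinom n t.2.1 * multinom n t.2.2 = weight t := by
  obtain ⟨ha, hb, hc, -⟩ := mem_balancedTriples.1 ht
  rw [multinom_eq_multinomial ha, multinom_eq_multinomial hb, multinom_eq_multinomial hc, weight]
  push_cast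
  rfl

theorem factorial_three_mul_div_eq_multinomial (n : ℕ) :
    (3 * n).factorial / n.factorial ^ 3 = Nat.multinomial univ fun _ : Fin 3 => n := by
  rw [Nat.multinomial, Fin.sum_univ_three, Fin.prod_univ_three]
  ring_nf

theorem filter_piFinset_eq_filter_balancedTriples (n : ℕ) :
    ((Fintype.piFinset fun _ : Fin 3 => range (n + 1)) ×ˢ
        (Fintype.piFinset fun _ : Fin 3 => range (n + 1)) ×ˢ
        (Fintype.piFinset fun _ : Fin 3 => range (n + 1))).filter
      (fun t => (∑ i, t.1 i = n) ∧ (∑ i, t.2.1 i = n) ∧ (∑ i, t.2.2 i = n) ∧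
        (∀ i, t.1 i + t.2.1 i + t.2.2 i = n) ∧
        3 ∣ t.2.1 1 + 2 * t.2.1 2 + 2 * t.2.2 1 + t.2.2 2) =
      (balancedTriples n).filter fun t => 3 ∣ phase t := by
  have hle : ∀ f : Fin 3 → ℕ, ∑ i, f i = n → ∀ i, f i ∈ range (n + 1) := fun f hf i =>
    mem_range_succ_iff.2 (hf ▸ single_le_sum (fun j _ => Nat.zero_le (f j)) (mem_univ i))
  ext t
  simp only [mem_filter, mem_product, Fintype.mem_piFinset, mem_balancedTriples]
  constructor
  · rintro ⟨-, ha, hb, hc, hcol, h3⟩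
    exact ⟨⟨ha, hb, hc, hcol⟩, h3⟩
  · rintro ⟨⟨ha, hb, hc, hcol⟩, h3⟩
    exact ⟨⟨hle _ ha, hle _ hb, hle _ hc⟩, ha, hb, hc, hcol, h3⟩

end ZagierB

theorem zagierB_binomial_formula_general (n : ℕ) :
    2 * (-1) ^ n * zagierB n =
      3 * (∑ t ∈ ((Fintype.piFinset fun _ : Fin 3 => range (n + 1)) ×ˢ
            (Fintype.piFinset fun _ : Fin 3 => range (n + 1)) ×ˢ
            (Fintype.piFinset fun _ : Fin 3 => range (n + 1))).filter
            (fun t => (∑ i, t.1 i = n) ∧ (∑ i, t.2.1 i = n) ∧ (∑ i, t.2.2 i = n) ∧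
              (∀ i, t.1 i + t.2.1 i + t.2.2 i = n) ∧
              3 ∣ t.2.1 1 + 2 * t.2.1 2 + 2 * t.2.2 1 + t.2.2 2),
            multinom n t.1 * multinom n t.2.1 * multinom n t.2.2) -
        ((3 * n).factorial / (n.factorial ^ 3) : ℕ) := by
  rw [ZagierB.filter_piFinset_eq_filter_balancedTriples,
    sum_congr rfl fun t ht =>
      ZagierB.multinom_mul_multinom_mul_multinom_eq_weight (mem_filter.1 ht).1,
    ZagierB.three_mul_sum_weight_filter_phase, ZagierB.factorial_three_mul_div_eq_multinomial]
  ring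

/-- The binomial-sum formula for Zagier's sporadic sequence B:
`2 (-1)^n B_n = 3 ∑_{(a,b,c) ∈ S(n)} C(n;a) C(n;b) C(n;c) − C(3n;n,n,n)`, where `S(n)`
consists of the triples of triples of nonnegative integers with
`∑ aᵢ = ∑ bᵢ = ∑ cᵢ = n`, `aᵢ + bᵢ + cᵢ = n` for each `i`, and
`3 ∣ b₂ + 2b₃ + 2c₂ + c₃`. -/
theorem zagierB_binomial_formula (n : ℕ) (hn : 0 < n) :
    2 * (-1) ^ n * zagierB n =
      3 * (∑ t ∈ ((Fintype.piFinset fun _ : Fin 3 => range (n + 1)) ×ˢ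
            (Fintype.piFinset fun _ : Fin 3 => range (n + 1)) ×ˢ
            (Fintype.piFinset fun _ : Fin 3 => range (n + 1))).filter
            (fun t => (∑ i, t.1 i = n) ∧ (∑ i, t.2.1 i = n) ∧ (∑ i, t.2.2 i = n) ∧
              (∀ i, t.1 i + t.2.1 i + t.2.2 i = n) ∧
              3 ∣ t.2.1 1 + 2 * t.2.1 2 + 2 * t.2.2 1 + t.2.2 2),
            multinom n t.1 * multinom n t.2.1 * multinom n t.2.2) -
        ((3 * n).factorial / (n.factorial ^ 3) : ℕ) :=
  zagierB_binomial_formula_general n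
end

section
/- For every positive integer n, the coefficient of x^n y^n z^n in the polynomial ((-x+y+z+1)(x-y+z+1)(x+y-z+1)(x+y+z-1))^n ∈ ℤ[x,y,z] equals u_n = ∑_{k=0}^{n} C(2n-2k,n-k)^2 C(2k,k)^2, i.e. the third-order Legendrian sequence u_n = 16^n ∑_{k=0}^{n} C(-1/2,n-k)^2 C(-1/2,k)^2 = ∑_{k=0}^{n} C(2n-2k,n-k)^2 C(2k,k)^2 is the constant term sequence of the Laurent polynomial (-x+y+z+1)(x-y+z+1)(x+y-z+1)(x+y+z-1)/(xyz). -/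
/-!
Factor the polynomial as `((x+y)² - (z-1)²) ((z+1)² - (x-y)²)`. After the substitution
`y ↦ xy` the three variables separate, and the coefficient of `xⁿyⁿzⁿ` becomes
`∑_{i+j=n} C(n,i)² c(j,i)²`, where `c(k,m)` is the middle coefficient of `(1-X)^{2k} (1+X)^{2m}`:
it arises once from the `(x,y)`-part and once from the `z`-part. Applying Euler's operator to
`(1-X)^{2k+1} (1+X)^{2m+1}` gives `(2m+1) c(k+1,m) + (2k+1) c(k,m+1) = 0`, from which
`C(k+m,k) c(k,m) = (-1)^k C(2k,k) C(2m,m)` follows by induction on `k`.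
-/

section MiddleCoeff

open Polynomial

noncomputable def middleCoeff (k m : ℕ) : ℤ :=
  ((1 - X) ^ (2 * k) * (1 + X) ^ (2 * m) : ℤ[X]).coeff (k + m)

lemma middleCoeff_zero_left (m : ℕ) : middleCoeff 0 m = m.centralBinom := by
  simp [middleCoeff, coeff_one_add_X_pow, Nat.centralBinom_eq_two_mul_choose]

lemma middleCoeff_recurrence (k m : ℕ) :
    (2 * m + 1) * middleCoeff (k + 1) m + (2 * k + 1) * middleCoeff k (m + 1) = 0 := by
  set f : ℤ[X] := (1 - X) ^ (2 * k + 1) * (1 + X) ^ (2 * m + 1)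
  have hf : derivative f = -(2 * k + 1 : ℤ[X]) * ((1 - X) ^ (2 * k) * (1 + X) ^ (2 * m + 1))
      + (2 * m + 1 : ℤ[X]) * ((1 - X) ^ (2 * k + 1) * (1 + X) ^ (2 * m)) := by
    simp only [f, derivative_mul, derivative_pow, derivative_sub, derivative_add, derivative_one,
      derivative_X, Nat.add_sub_cancel, map_natCast]
    push_cast
    ring
  -- Euler's operator `2N - 2X d/dX` kills the coefficient of `X ^ N`, here for `N = k + m + 1`.
  have euler : C (2 * m + 1 : ℤ) * ((1 - X) ^ (2 * (k + 1)) * (1 + X) ^ (2 * m))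
      + C (2 * k + 1 : ℤ) * ((1 - X) ^ (2 * k) * (1 + X) ^ (2 * (m + 1)))
      = C (2 * (k + m + 1 : ℤ)) * f - C 2 * (X * derivative f) := by
    rw [hf]
    simp only [f, map_mul, map_add, map_natCast, map_ofNat, map_one]
    ring
  have hcoeff := congrArg (coeff · (k + m + 1)) euler
  simp only [coeff_add, coeff_sub, coeff_C_mul, coeff_X_mul, coeff_derivative] at hcoeff
  rw [middleCoeff, middleCoeff, show k + 1 + m = k + m + 1 by omega,
    show k + (m + 1) = k + m + 1 by omega, hcoeff]
  push_cast
  ring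

lemma choose_mul_middleCoeff (k m : ℕ) :
    (k + m).choose k * middleCoeff k m = (-1) ^ k * k.centralBinom * m.centralBinom := by
  induction k generalizing m with
  | zero => simp [middleCoeff_zero_left]
  | succ k ih =>
    have hrec := middleCoeff_recurrence k m
    have hih := ih (m + 1)
    have hchoose :
        ((k + 1 + m).choose (k + 1) * (k + 1) : ℤ) = (k + (m + 1)).choose k * (m + 1) := by
      have h := Nat.choose_succ_right_eq (k + m + 1) k
      rw [show k + m + 1 - k = m + 1 by omega] at h
      rw [show k + 1 + m = k + m + 1 by omega, show k + (m + 1) = k + m + 1 by omega]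
      exact_mod_cast h
    have hk : ((k + 1) * (k + 1).centralBinom : ℤ) = 2 * (2 * k + 1) * k.centralBinom := by
      exact_mod_cast Nat.succ_mul_centralBinom_succ k
    have hm : ((m + 1) * (m + 1).centralBinom : ℤ) = 2 * (2 * m + 1) * m.centralBinom := by
      exact_mod_cast Nat.succ_mul_centralBinom_succ m
    have hpos : ((2 * m + 1) * (k + 1) : ℤ) ≠ 0 := by positivity
    apply mul_left_cancel₀ hpos
    linear_combination ((2 * m + 1) * middleCoeff (k + 1) m) * hchoose
      + ((k + (m + 1)).choose k * (m + 1) : ℤ) * hrec - ((2 * k + 1) * (m + 1) : ℤ) * hih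
      - ((-1) ^ k * (2 * k + 1) * k.centralBinom : ℤ) * hm
      + ((-1) ^ k * (2 * m + 1) * m.centralBinom : ℤ) * hk

end MiddleCoeff

namespace Polynomial

open Finset

section CommSemiring

variable {R : Type*} [CommSemiring R]

lemma coeff_C_mul_X_add_C_pow (a b : R) (n k : ℕ) :
    ((C a * X + C b) ^ n).coeff k = n.choose k * a ^ k * b ^ (n - k) := by
  have hterm : ∀ i, (C a * X) ^ i * C b ^ (n - i) * (n.choose i : R[X]) =
      C (n.choose i * a ^ i * b ^ (n - i)) * X ^ i := fun i => by
    simp only [map_mul, map_pow, map_natCast]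
    ring
  simp only [add_pow, finsetSum_coeff, hterm, coeff_C_mul_X_pow, sum_ite_eq, mem_range]
  split_ifs with hk
  · rfl
  · simp [Nat.choose_eq_zero_of_lt (not_lt.mp hk)]

lemma coeff_C_mul_X_add_C_pow_mul_pow (a b c d : R) (n : ℕ) :
    ((C a * X + C b) ^ n * (C d * X + C c) ^ n).coeff n =
      ∑ ij ∈ antidiagonal n, n.choose ij.1 * n.choose ij.2 * (a * c) ^ ij.1 * (b * d) ^ ij.2 := by
  rw [coeff_mul]
  refine sum_congr rfl fun ij hij => ?_
  obtain rfl : n = ij.1 + ij.2 := (mem_antidiagonal.mp hij).symm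
  simp only [coeff_C_mul_X_add_C_pow, Nat.add_sub_cancel_left, Nat.add_sub_cancel]
  ring

lemma coeff_coeff_map_C_mul_C (p q : R[X]) (i j : ℕ) :
    ((p.map C * C q).coeff i).coeff j = p.coeff i * q.coeff j := by
  rw [coeff_mul_C, coeff_map, coeff_C_mul]

end CommSemiring

lemma coeff_two_mul_C_mul_X_sq_sub_C_mul_C_sub_C_mul_X_sq_pow {R : Type*} [CommRing R]
    (a b c d : R) (n : ℕ) :
    (((C a * X ^ 2 - C b) * (C c - C d * X ^ 2)) ^ n).coeff (2 * n) =
      ∑ ij ∈ antidiagonal n, n.choose ij.1 * n.choose ij.2 * (a * c) ^ ij.1 * (b * d) ^ ij.2 := by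
  have h := coeff_C_mul_X_add_C_pow_mul_pow a (-b) c (-d) n
  rw [neg_mul_neg, ← mul_pow, ← coeff_expand_mul' two_pos] at h
  rw [← h]
  simp only [map_pow, map_mul, map_add, expand_C, expand_X, map_neg, sub_eq_add_neg, neg_mul]
  ring_nf

end Polynomial

section Tower

open Polynomial

variable {R : Type*} [CommSemiring R]

/-- Substitution of `x ↦ X`, `y ↦ T X`, `z ↦ Z` into `R[Z][T][X]`. It sends `x^a y^b z^c` to
`X^(a+b) T^b Z^c`, so it loses no coefficient, and it turns `x ± y` into `(1 ± T) X`. -/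
noncomputable def toTower : MvPolynomial (Fin 3) R →ₐ[R] R[X][X][X] :=
  MvPolynomial.aeval ![(X : R[X][X][X]), C X * X, C (C X)]

lemma toTower_monomial (u : Fin 3 →₀ ℕ) (r : R) :
    toTower (MvPolynomial.monomial u r) = C (C (C r * X ^ u 2) * X ^ u 1) * X ^ (u 0 + u 1) := by
  simp only [toTower, MvPolynomial.aeval_monomial, Finsupp.prod_fintype _ _ (fun _ => pow_zero _),
    Fin.prod_univ_three, Polynomial.algebraMap_apply, Algebra.algebraMap_self, RingHom.id_apply,
    Matrix.cons_val_zero, Matrix.cons_val_one, Matrix.cons_val, map_mul, map_pow]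
  ring

lemma coeff_toTower (Q : MvPolynomial (Fin 3) R) (m : Fin 3 →₀ ℕ) :
    (((toTower Q).coeff (m 0 + m 1)).coeff (m 1)).coeff (m 2) = Q.coeff m := by
  induction Q using MvPolynomial.induction_on' with
  | monomial u r =>
    have hexp : u = m ↔ m 0 + m 1 = u 0 + u 1 ∧ m 1 = u 1 ∧ m 2 = u 2 := by
      refine ⟨by rintro rfl; simp, fun ⟨h01, h1, h2⟩ => ?_⟩
      ext i
      fin_cases i <;> simp <;> omega
    simp only [toTower_monomial, coeff_C_mul_X_pow, apply_ite (coeff · (m 1)),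
      apply_ite (coeff · (m 2)), coeff_zero, ← ite_and, and_assoc, MvPolynomial.coeff_monomial,
      hexp]
  | add p q hp hq => simp only [map_add, coeff_add, MvPolynomial.coeff_add, hp, hq]

end Tower

section Legendrian

open Polynomial

lemma toTower_legendrian :
    toTower ((-MvPolynomial.X 0 + MvPolynomial.X 1 + MvPolynomial.X 2 + 1) *
        (MvPolynomial.X 0 - MvPolynomial.X 1 + MvPolynomial.X 2 + 1) *
        (MvPolynomial.X 0 + MvPolynomial.X 1 - MvPolynomial.X 2 + 1) *
        (MvPolynomial.X 0 + MvPolynomial.X 1 + MvPolynomial.X 2 - 1) : MvPolynomial (Fin 3) ℤ) =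
      (C ((1 + X) ^ 2 : ℤ[X][X]) * X ^ 2 - C ((1 - C X) ^ 2)) *
        (C ((1 + C X) ^ 2) - C ((1 - X) ^ 2 : ℤ[X][X]) * X ^ 2) := by
  simp only [toTower, map_mul, map_add, map_sub, map_neg, map_one, map_pow, MvPolynomial.aeval_X,
    Matrix.cons_val_zero, Matrix.cons_val_one, Matrix.cons_val]
  ring

lemma coeff_coeff_legendrian_summand (i j : ℕ) :
    (((((i + j).choose i : ℤ[X][X]) * ((i + j).choose j : ℤ[X][X]) *
        ((1 + X) ^ 2 * (1 + C X) ^ 2) ^ i * ((1 - C X) ^ 2 * (1 - X) ^ 2) ^ j :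
          ℤ[X][X]).coeff (i + j)).coeff (i + j)) =
      (i.centralBinom : ℤ) ^ 2 * j.centralBinom ^ 2 := by
  set p : ℤ[X] := (1 - X) ^ (2 * j) * (1 + X) ^ (2 * i)
  have hsplit : ((1 + X) ^ 2 * (1 + C X) ^ 2) ^ i * ((1 - C X) ^ 2 * (1 - X) ^ 2) ^ j =
      p.map C * C p := by
    simp only [p, Polynomial.map_mul, Polynomial.map_pow, Polynomial.map_sub, Polynomial.map_add,
      Polynomial.map_one, map_X, map_mul, map_pow, map_sub, map_add, map_one, mul_pow, ← pow_mul]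
    ring
  have hmid : p.coeff (i + j) = middleCoeff j i := by rw [middleCoeff, add_comm]
  have hkey := choose_mul_middleCoeff j i
  rw [add_comm j i, ← Nat.choose_symm_add] at hkey
  rw [mul_assoc, hsplit, ← Nat.cast_mul, coeff_natCast_mul, coeff_natCast_mul,
    coeff_coeff_map_C_mul_C, hmid, ← Nat.choose_symm_add]
  calc _ = ((i + j).choose i * middleCoeff j i : ℤ) ^ 2 := by push_cast; ring
    _ = _ := by rw [hkey, mul_pow, mul_pow, ← pow_mul, pow_mul', neg_one_sq, one_pow]; ring

end Legendrian

open MvPolynomial Finset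

theorem legendrian_constant_term_general (n : ℕ) :
    (((-X 0 + X 1 + X 2 + 1) * (X 0 - X 1 + X 2 + 1) * (X 0 + X 1 - X 2 + 1) *
        (X 0 + X 1 + X 2 - 1) : MvPolynomial (Fin 3) ℤ) ^ n).coeff
      (Finsupp.equivFunOnFinite.symm fun _ => n) =
    ∑ k ∈ range (n + 1),
      ((2 * n - 2 * k).choose (n - k) : ℤ) ^ 2 * ((2 * k).choose k : ℤ) ^ 2 := by
  rw [← coeff_toTower, map_pow, toTower_legendrian]
  simp only [Finsupp.coe_equivFunOnFinite_symm, ← two_mul,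
    Polynomial.coeff_two_mul_C_mul_X_sq_sub_C_mul_C_sub_C_mul_X_sq_pow, Polynomial.finsetSum_coeff]
  calc _ = ∑ ij ∈ antidiagonal n, (ij.1.centralBinom : ℤ) ^ 2 * ij.2.centralBinom ^ 2 :=
        sum_congr rfl fun ij hij => by
          rw [← mem_antidiagonal.mp hij]
          exact coeff_coeff_legendrian_summand ij.1 ij.2
    _ = _ := by
      rw [Nat.sum_antidiagonal_eq_sum_range_succ fun i j =>
        (i.centralBinom : ℤ) ^ 2 * j.centralBinom ^ 2]
      refine sum_congr rfl fun k _ => ?_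
      rw [Nat.centralBinom_eq_two_mul_choose, Nat.centralBinom_eq_two_mul_choose, Nat.mul_sub,
        mul_comm]

/-- The third-order Legendrian sequence `u_n = ∑_{k=0}^n C(2n-2k,n-k)² C(2k,k)²` is the
constant term sequence of the Laurent polynomial
`(-x+y+z+1)(x-y+z+1)(x+y-z+1)(x+y+z-1)/(xyz)`: the coefficient of `x^n y^n z^n` in
`((-x+y+z+1)(x-y+z+1)(x+y-z+1)(x+y+z-1))^n` equals `u_n`. -/
theorem legendrian_constant_term (n : ℕ) (hn : 0 < n) :
    (((-X 0 + X 1 + X 2 + 1) * (X 0 - X 1 + X 2 + 1) * (X 0 + X 1 - X 2 + 1) *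
        (X 0 + X 1 + X 2 - 1) : MvPolynomial (Fin 3) ℤ) ^ n).coeff
      (Finsupp.equivFunOnFinite.symm fun _ => n) =
    ∑ k ∈ range (n + 1),
      ((2 * n - 2 * k).choose (n - k) : ℤ) ^ 2 * ((2 * k).choose k : ℤ) ^ 2 :=
  legendrian_constant_term_general n
end
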